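/- arXiv:2406.03362 — 4 statements merged into one kernel-verified Lean document; each statement's English description precedes it below -/
import Mathlib

section
/- For any sequence m = (m_1, …, m_n) ∈ {−1,0,1}^n and any m-pair (a, b) with a < b, the sum of the original entries strictly between the two paired positions vanishes: Σ_{a<ℓ<b} m_ℓ = 0. -/
/-- One step of the pairing algorithm deletes (zeroes out) positions `a` and `b`. -/
def zeroOut {n : ℕ} (m : Fin n → ℤ) (a b : Fin n) : Fin n → ℤ :=
  Function.update (Function.update m a 0) b 0

/-- `ChosenPair m a b` : `(a, b)` is the (unique) pair chosen at the current step of the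
pairing algorithm: `a < b`, `m a * m b = -1`, all entries strictly between `a` and `b`
vanish, and all entries before `a` have sign compatible with `m a`. -/
def ChosenPair {n : ℕ} (m : Fin n → ℤ) (a b : Fin n) : Prop :=
  a < b ∧ m a * m b = -1 ∧ (∀ ℓ, a < ℓ → ℓ < b → m ℓ = 0) ∧
    (∀ ℓ, ℓ < a → 0 ≤ m a * m ℓ)

/-- `IsMPair m a b` : `(a, b)` is an `m`-pair, i.e. it is chosen at some step of the
recursive pairing algorithm: either `(a, b)` is the pair chosen for `m`, or it is a pair of
the sequence obtained from `m` by zeroing out the entries of the chosen pair of `m`. -/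
inductive IsMPair {n : ℕ} : (Fin n → ℤ) → Fin n → Fin n → Prop
  | chosen {m : Fin n → ℤ} {a b : Fin n} : ChosenPair m a b → IsMPair m a b
  | later {m : Fin n → ℤ} {a b a' b' : Fin n} :
      ChosenPair m a' b' → IsMPair (zeroOut m a' b') a b → IsMPair m a b

/-!
Induct along the pairing algorithm. When `(a, b)` is chosen, the entries strictly
between them are zero. Each earlier step zeroes out a pair `(a', b')` whose entries are `1` and
`-1`, and since no entry strictly between `a'` and `b'` survives that step, the nonzero entries
`a`, `b` of the later pair cannot separate `a'` from `b'`: either both or neither lie in the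
interval `(a, b)`, so undoing the step does not change the sum over that interval.
-/

open Finset

variable {n : ℕ} {m : Fin n → ℤ} {a b a' b' : Fin n}

lemma zeroOut_ne_zero_iff {ℓ : Fin n} :
    zeroOut m a b ℓ ≠ 0 ↔ ℓ ≠ a ∧ ℓ ≠ b ∧ m ℓ ≠ 0 := by
  by_cases hb : ℓ = b
  · simp [zeroOut, hb]
  by_cases ha : ℓ = a
  · subst ha; simp [zeroOut, hb]
  simp [zeroOut, ha, hb]

lemma zeroOut_add_single_add_single (hne : a ≠ b) (ℓ : Fin n) :
    zeroOut m a b ℓ + (Pi.single a (m a) : Fin n → ℤ) ℓ + (Pi.single b (m b) : Fin n → ℤ) ℓ =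
      m ℓ := by
  by_cases hb : ℓ = b
  · subst hb; simp [zeroOut, hne]
  by_cases ha : ℓ = a
  · subst ha; simp [zeroOut, hb]
  simp [zeroOut, ha, hb]

lemma sum_zeroOut_of_mem_iff (hne : a ≠ b) (hsum : m a + m b = 0) {s : Finset (Fin n)}
    (hs : a ∈ s ↔ b ∈ s) : ∑ ℓ ∈ s, zeroOut m a b ℓ = ∑ ℓ ∈ s, m ℓ := by
  rw [← sum_congr rfl fun ℓ _ => zeroOut_add_single_add_single (m := m) hne ℓ,
    sum_add_distrib, sum_add_distrib, sum_pi_single', sum_pi_single']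
  by_cases hb : b ∈ s
  · simp [hs.2 hb, hb, add_assoc, hsum]
  · simp [mt hs.1 hb, hb]

lemma ChosenPair.add_eq_zero (hc : ChosenPair m a b) : m a + m b = 0 := by
  rcases Int.eq_one_or_neg_one_of_mul_eq_neg_one' hc.2.1 with ⟨ha, hb⟩ | ⟨ha, hb⟩ <;>
    simp [ha, hb]

lemma IsMPair.apply_ne_zero (h : IsMPair m a b) : m a ≠ 0 ∧ m b ≠ 0 := by
  induction h with
  | @chosen m a b hc =>
    have hne : m a * m b ≠ 0 := by simp [hc.2.1]
    exact ⟨left_ne_zero_of_mul hne, right_ne_zero_of_mul hne⟩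
  | later _ _ ih => exact ⟨(zeroOut_ne_zero_iff.1 ih.1).2.2, (zeroOut_ne_zero_iff.1 ih.2).2.2⟩

lemma ChosenPair.mem_Ioo_iff (hc : ChosenPair m a' b') (ha : zeroOut m a' b' a ≠ 0)
    (hb : zeroOut m a' b' b ≠ 0) : a' ∈ Ioo a b ↔ b' ∈ Ioo a b := by
  obtain ⟨haa', -, hma⟩ := zeroOut_ne_zero_iff.1 ha
  obtain ⟨-, hbb', hmb⟩ := zeroOut_ne_zero_iff.1 hb
  obtain ⟨hlt, -, hbetween, -⟩ := hc
  simp only [mem_Ioo]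
  constructor
  · rintro ⟨h1, h2⟩
    exact ⟨h1.trans hlt, lt_of_not_ge fun h => hmb (hbetween b h2 (lt_of_le_of_ne h hbb'))⟩
  · rintro ⟨h1, h2⟩
    exact ⟨lt_of_not_ge fun h => hma (hbetween a (lt_of_le_of_ne h haa'.symm) h1), hlt.trans h2⟩

lemma IsMPair.sum_Ioo_eq_zero (h : IsMPair m a b) : ∑ ℓ ∈ Ioo a b, m ℓ = 0 := by
  induction h with
  | chosen hc => exact sum_eq_zero fun ℓ hℓ => hc.2.2.1 ℓ (mem_Ioo.1 hℓ).1 (mem_Ioo.1 hℓ).2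
  | later hc hpair ih =>
    rw [← sum_zeroOut_of_mem_iff hc.1.ne hc.add_eq_zero
      (hc.mem_Ioo_iff hpair.apply_ne_zero.1 hpair.apply_ne_zero.2)]
    exact ih

theorem mPair_sum_between_eq_zero_general {n : ℕ} (m : Fin n → ℤ)
    {a b : Fin n}
    (hpair : IsMPair m a b) :
    ∑ ℓ ∈ Finset.univ.filter (fun ℓ : Fin n => a < ℓ ∧ ℓ < b), m ℓ = 0 := by
  rw [filter_lt_lt_eq_Ioo]
  exact hpair.sum_Ioo_eq_zero

/-- For any `m`-pair `(a, b)` with `a < b`, the sum of the original entries strictly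
between the two paired positions vanishes. -/
theorem mPair_sum_between_eq_zero {n : ℕ} (m : Fin n → ℤ)
    (hm : ∀ i, m i = -1 ∨ m i = 0 ∨ m i = 1) {a b : Fin n}
    (hpair : IsMPair m a b) (hab : a < b) :
    ∑ ℓ ∈ Finset.univ.filter (fun ℓ : Fin n => a < ℓ ∧ ℓ < b), m ℓ = 0 :=
  mPair_sum_between_eq_zero_general m hpair
end

section
/- Let (B̃, Λ) be a compatible pair and let 1 ≤ k ≤ n. Then μ_k(B̃)ᵀ · μ_k(Λ) = B̃ᵀ · Λ. In particular the mutated pair (μ_k(B̃), μ_k(Λ)) is again compatible, with the same diagonal matrix D. -/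
open Matrix

/-- The positive part `[a]_+ = max (a, 0)` of an integer. -/
def intPosPart (a : ℤ) : ℤ := max a 0

/-- `(B̃, Λ)` is a compatible pair with diagonal `D = diag (d 0, …, d (n-1))`:
`Λ` is skew-symmetric and `B̃ᵀ Λ = (D 0)`. -/
def IsCompatiblePair {m n : ℕ} (hnm : n ≤ m)
    (B : Matrix (Fin m) (Fin n) ℤ) (L : Matrix (Fin m) (Fin m) ℤ)
    (d : Fin n → ℤ) : Prop :=
  Lᵀ = -L ∧ (∀ i, 0 < d i) ∧
    ∀ (i : Fin n) (j : Fin m),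
      (Bᵀ * L) i j = if (j : ℕ) = (i : ℕ) then d i else 0

/-- The mutation `μ_k(B̃)` of the extended exchange matrix in direction `k`. -/
def mutB {m n : ℕ} (hnm : n ≤ m) (B : Matrix (Fin m) (Fin n) ℤ) (k : Fin n) :
    Matrix (Fin m) (Fin n) ℤ :=
  fun i j =>
    if i = Fin.castLE hnm k ∨ j = k then -B i j
    else B i j + intPosPart (B i k) * intPosPart (B (Fin.castLE hnm k) j)
      - intPosPart (-B i k) * intPosPart (-B (Fin.castLE hnm k) j)

/-- The mutation `μ_k(Λ)` of the quantum commutation matrix in direction `k`: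
`λ'_{ij} = λ_{ij}` for `i, j ≠ k`, `λ'_{ik} = -λ_{ik} + Σ_l [b_{lk}]_+ · λ_{il}` for
`i ≠ k`, extended skew-symmetrically. -/
def mutLam {m n : ℕ} (hnm : n ≤ m) (B : Matrix (Fin m) (Fin n) ℤ)
    (L : Matrix (Fin m) (Fin m) ℤ) (k : Fin n) : Matrix (Fin m) (Fin m) ℤ :=
  fun i j =>
    if i = Fin.castLE hnm k then
      if j = Fin.castLE hnm k then 0
      else -(-L j (Fin.castLE hnm k) + ∑ l, intPosPart (B l k) * L j l)
    else if j = Fin.castLE hnm k then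
      -L i (Fin.castLE hnm k) + ∑ l, intPosPart (B l k) * L i l
    else L i j

/-!
Following Berenstein–Zelevinsky, both mutations are congruences by explicit integer matrices:
`μ_k(B̃) = E B̃ F` and `μ_k(Λ) = Eᵀ Λ E`, where `E = E_ε`, `F = F_ε` with `ε = -1` differ from the
identity only in column `k` and row `k` respectively, and `E² = 1`. Hence
`μ_k(B̃)ᵀ μ_k(Λ) = Fᵀ (B̃ᵀ Λ) E = Fᵀ (D 0) E`. Compatibility makes `(D 0) B̃ = B̃ᵀ Λ B̃`
skew-symmetric; this gives `b_kk = 0` and `d_i [b_ik]_+ = d_k [-b_ki]_+`, which is exactly what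
`Fᵀ (D 0) E = (D 0)` needs.
-/

lemma intPosPart_mul_intPosPart_sub_neg (a b : ℤ) :
    intPosPart a * intPosPart b - intPosPart (-a) * intPosPart (-b) =
      intPosPart a * b + a * intPosPart (-b) := by
  simp only [intPosPart, max_def]
  split_ifs <;> nlinarith

@[simp]
lemma intPosPart_zero : intPosPart 0 = 0 := rfl

lemma intPosPart_mul_of_nonneg {c : ℤ} (hc : 0 ≤ c) (a : ℤ) :
    intPosPart (c * a) = c * intPosPart a := by
  simp only [intPosPart, mul_max_of_nonneg _ _ hc, mul_zero]

lemma transpose_mul_mul_eq_neg {ι κ R : Type*} [Fintype ι] [CommRing R] {L : Matrix ι ι R}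
    (hL : Lᵀ = -L) (E : Matrix ι κ R) : (Eᵀ * L * E)ᵀ = -(Eᵀ * L * E) := by
  simp [transpose_mul, hL, Matrix.mul_assoc]

section Factorization

variable {m n : ℕ} (hnm : n ≤ m) (B : Matrix (Fin m) (Fin n) ℤ) (k : Fin n)

def mutE : Matrix (Fin m) (Fin m) ℤ :=
  of fun i j =>
    if j = Fin.castLE hnm k then (if i = j then -1 else intPosPart (B i k))
    else if i = j then 1 else 0

def mutF : Matrix (Fin n) (Fin n) ℤ :=
  of fun i j =>
    if i = k then (if j = k then -1 else intPosPart (-B (Fin.castLE hnm k) j))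
    else if i = j then 1 else 0

variable {hnm B k} {l : Type*}

lemma mutE_mul_apply_of_ne (X : Matrix (Fin m) l ℤ) {i : Fin m} (hi : i ≠ Fin.castLE hnm k)
    (j : l) : (mutE hnm B k * X) i j = X i j + intPosPart (B i k) * X (Fin.castLE hnm k) j := by
  have hrow : ∀ p, mutE hnm B k i p =
      (if p = i then 1 else 0) + if p = Fin.castLE hnm k then intPosPart (B i k) else 0 := by
    intro p
    by_cases hp : p = Fin.castLE hnm k <;> by_cases hpi : p = i <;> simp_all [mutE, eq_comm]
  simp [mul_apply, hrow, add_mul, Finset.sum_add_distrib]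

lemma mutE_mul_apply_self (X : Matrix (Fin m) l ℤ) (j : l) :
    (mutE hnm B k * X) (Fin.castLE hnm k) j = -X (Fin.castLE hnm k) j := by
  have hrow : ∀ p, mutE hnm B k (Fin.castLE hnm k) p =
      -if p = Fin.castLE hnm k then 1 else 0 := by
    intro p
    by_cases hp : p = Fin.castLE hnm k <;> simp_all [mutE, eq_comm]
  simp [mul_apply, hrow]

lemma mul_mutE_apply_of_ne (X : Matrix l (Fin m) ℤ) (i : l) {j : Fin m}
    (hj : j ≠ Fin.castLE hnm k) : (X * mutE hnm B k) i j = X i j := by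
  simp [mul_apply, mutE, hj]

lemma mul_mutE_apply_self (hB : B (Fin.castLE hnm k) k = 0) (X : Matrix l (Fin m) ℤ) (i : l) :
    (X * mutE hnm B k) i (Fin.castLE hnm k) =
      -X i (Fin.castLE hnm k) + ∑ p, intPosPart (B p k) * X i p := by
  have hcol : ∀ p, mutE hnm B k p (Fin.castLE hnm k) =
      intPosPart (B p k) - if p = Fin.castLE hnm k then 1 else 0 := by
    intro p
    by_cases hp : p = Fin.castLE hnm k <;> simp_all [mutE]
  simp only [mul_apply, hcol, mul_sub, mul_ite, mul_one, mul_zero, Finset.sum_sub_distrib,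
    Finset.sum_ite_eq', Finset.mem_univ, if_true, mul_comm]
  ring

lemma mul_mutF_apply_of_ne (X : Matrix l (Fin n) ℤ) (i : l) {j : Fin n} (hj : j ≠ k) :
    (X * mutF hnm B k) i j = X i j + X i k * intPosPart (-B (Fin.castLE hnm k) j) := by
  have hcol : ∀ q, mutF hnm B k q j =
      (if q = j then 1 else 0) + if q = k then intPosPart (-B (Fin.castLE hnm k) j) else 0 := by
    intro q
    by_cases hq : q = k <;> by_cases hqj : q = j <;> simp_all [mutF, eq_comm]
  simp [mul_apply, hcol, mul_add, Finset.sum_add_distrib]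

lemma mul_mutF_apply_self (X : Matrix l (Fin n) ℤ) (i : l) :
    (X * mutF hnm B k) i k = -X i k := by
  have hcol : ∀ q, mutF hnm B k q k = -if q = k then 1 else 0 := by
    intro q
    by_cases hq : q = k <;> simp_all [mutF, eq_comm]
  simp [mul_apply, hcol]

lemma transpose_mutE_mul_apply (X : Matrix (Fin m) l ℤ) (i : Fin m) (j : l) :
    ((mutE hnm B k)ᵀ * X) i j = (Xᵀ * mutE hnm B k) j i := by
  rw [← transpose_apply (Xᵀ * _), transpose_mul, transpose_transpose]

lemma transpose_mutF_mul_apply (X : Matrix (Fin n) l ℤ) (i : Fin n) (j : l) :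
    ((mutF hnm B k)ᵀ * X) i j = (Xᵀ * mutF hnm B k) j i := by
  rw [← transpose_apply (Xᵀ * _), transpose_mul, transpose_transpose]

lemma mutE_mul_self : mutE hnm B k * mutE hnm B k = 1 := by
  ext i j
  by_cases hi : i = Fin.castLE hnm k
  · subst hi
    rw [mutE_mul_apply_self]
    by_cases hj : j = Fin.castLE hnm k <;> simp [mutE, hj, one_apply, eq_comm]
  · rw [mutE_mul_apply_of_ne _ hi]
    by_cases hj : j = Fin.castLE hnm k
    · simp [mutE, hi, hj]
    · simp [mutE, hj, Ne.symm hj, one_apply]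

lemma mutB_eq_mutE_mul_mul_mutF (hB : B (Fin.castLE hnm k) k = 0) :
    mutB hnm B k = mutE hnm B k * B * mutF hnm B k := by
  ext i j
  by_cases hj : j = k
  · subst hj
    rw [mul_mutF_apply_self]
    by_cases hi : i = Fin.castLE hnm j
    · subst hi
      simp [mutE_mul_apply_self, mutB, hB]
    · simp [mutE_mul_apply_of_ne _ hi, hB, mutB]
  · rw [mul_mutF_apply_of_ne _ _ hj]
    by_cases hi : i = Fin.castLE hnm k
    · subst hi
      simp [mutE_mul_apply_self, hB, mutB]
    · have := intPosPart_mul_intPosPart_sub_neg (B i k) (B (Fin.castLE hnm k) j)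
      simp only [mutE_mul_apply_of_ne _ hi, hB, mutB, hi, hj, or_self, if_false]
      linarith

lemma mutLam_eq_transpose_mutE_mul_mul_mutE {L : Matrix (Fin m) (Fin m) ℤ} (hL : Lᵀ = -L)
    (hB : B (Fin.castLE hnm k) k = 0) :
    mutLam hnm B L k = (mutE hnm B k)ᵀ * L * mutE hnm B k := by
  have hLij : ∀ i j, L j i = -L i j := fun i j => by
    simpa using congrFun (congrFun hL i) j
  ext i j
  by_cases hj : j = Fin.castLE hnm k
  · subst hj
    by_cases hi : i = Fin.castLE hnm k
    · subst hi
      have := congrFun (congrFun (transpose_mul_mul_eq_neg hL (mutE hnm B k))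
        (Fin.castLE hnm k)) (Fin.castLE hnm k)
      simp only [transpose_apply, neg_apply] at this
      simp only [mutLam, if_true]
      omega
    · rw [mul_mutE_apply_self hB]
      simp only [transpose_mutE_mul_apply, hL, neg_apply,
        mul_mutE_apply_of_ne _ _ hi, mutLam, hi, if_true, if_false, hLij i]
      simp
  · rw [mul_mutE_apply_of_ne _ _ hj, transpose_mutE_mul_apply, hL]
    by_cases hi : i = Fin.castLE hnm k
    · subst hi
      simp only [mutLam, if_true, hj, if_false, mul_mutE_apply_self hB, Matrix.neg_apply, mul_neg,
        Finset.sum_neg_distrib]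
      ring
    · simp only [mutLam, hi, hj, if_false, mul_mutE_apply_of_ne _ _ hi, Matrix.neg_apply]
      exact hLij j i

end Factorization

section Compatibility

/-- The `n × m` matrix `(D 0)`. -/
def diagZero {m n : ℕ} (hnm : n ≤ m) (d : Fin n → ℤ) : Matrix (Fin n) (Fin m) ℤ :=
  of fun i j => if j = Fin.castLE hnm i then d i else 0

variable {m n : ℕ} {hnm : n ≤ m} {B : Matrix (Fin m) (Fin n) ℤ} {L : Matrix (Fin m) (Fin m) ℤ}
  {d : Fin n → ℤ}

lemma isCompatiblePair_iff :
    IsCompatiblePair hnm B L d ↔ Lᵀ = -L ∧ (∀ i, 0 < d i) ∧ Bᵀ * L = diagZero hnm d := by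
  have hcast : ∀ (i : Fin n) (j : Fin m), (j : ℕ) = i ↔ j = Fin.castLE hnm i := by
    simp [Fin.ext_iff]
  simp only [IsCompatiblePair, ← Matrix.ext_iff, diagZero, of_apply, hcast]

lemma diagZero_mul_apply {l : Type*} (X : Matrix (Fin m) l ℤ) (i : Fin n) (j : l) :
    (diagZero hnm d * X) i j = d i * X (Fin.castLE hnm i) j := by
  simp [diagZero, mul_apply]

lemma transpose_diagZero_mul_eq_neg (hL : Lᵀ = -L) (h : Bᵀ * L = diagZero hnm d) :
    (diagZero hnm d * B)ᵀ = -(diagZero hnm d * B) := by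
  simpa [← h, Matrix.mul_assoc] using transpose_mul_mul_eq_neg hL B

variable (hs : (diagZero hnm d * B)ᵀ = -(diagZero hnm d * B))
include hs

lemma mul_apply_castLE_antisymm (i j : Fin n) :
    d j * B (Fin.castLE hnm j) i = -(d i * B (Fin.castLE hnm i) j) := by
  simpa [diagZero_mul_apply] using congrFun (congrFun hs i) j

lemma apply_castLE_self_eq_zero (hd : ∀ i, 0 < d i) (k : Fin n) :
    B (Fin.castLE hnm k) k = 0 := by
  have h : d k * B (Fin.castLE hnm k) k = 0 := by linarith [mul_apply_castLE_antisymm hs k k]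
  exact (mul_eq_zero.1 h).resolve_left (hd k).ne'

lemma transpose_mutF_mul_diagZero_mul_mutE (hd : ∀ i, 0 < d i) (k : Fin n) :
    (mutF hnm B k)ᵀ * diagZero hnm d * mutE hnm B k = diagZero hnm d := by
  have hB := apply_castLE_self_eq_zero hs hd k
  have hposPart : ∀ i, d i * intPosPart (B (Fin.castLE hnm i) k) =
      d k * intPosPart (-B (Fin.castLE hnm k) i) := by
    intro i
    rw [← intPosPart_mul_of_nonneg (hd i).le, ← intPosPart_mul_of_nonneg (hd k).le, mul_neg,
      mul_apply_castLE_antisymm hs]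
  rw [Matrix.mul_assoc]
  set Y := diagZero hnm d * mutE hnm B k
  have hY : ∀ a j, j ≠ Fin.castLE hnm k → Y a j = diagZero hnm d a j := fun a j hj =>
    mul_mutE_apply_of_ne _ _ hj
  have hYk : ∀ a, Y a (Fin.castLE hnm k) =
      -diagZero hnm d a (Fin.castLE hnm k) + intPosPart (B (Fin.castLE hnm a) k) * d a := by
    intro a
    simp [Y, mul_mutE_apply_self hB, diagZero]
  ext i j
  rw [transpose_mutF_mul_apply]
  by_cases hi : i = k
  · subst hi
    rw [mul_mutF_apply_self, transpose_apply]
    by_cases hj : j = Fin.castLE hnm i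
    · subst hj
      simp [hYk, hB, diagZero]
    · simp [hY _ _ hj, diagZero, hj]
  · rw [mul_mutF_apply_of_ne _ _ hi, transpose_apply, transpose_apply]
    by_cases hj : j = Fin.castLE hnm k
    · subst hj
      simp only [hYk, diagZero, of_apply, Fin.castLE_inj, Ne.symm hi, if_true, if_false, hB,
        intPosPart_zero]
      linarith [hposPart i]
    · simp [hY _ _ hj, diagZero, hj]

end Compatibility

theorem mutation_compatible_general {m n : ℕ} (hnm : n ≤ m)
    (B : Matrix (Fin m) (Fin n) ℤ) (L : Matrix (Fin m) (Fin m) ℤ)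
    (d : Fin n → ℤ) (hcompat : IsCompatiblePair hnm B L d) (k : Fin n) :
    (mutB hnm B k)ᵀ * mutLam hnm B L k = Bᵀ * L ∧
      IsCompatiblePair hnm (mutB hnm B k) (mutLam hnm B L k) d := by
  obtain ⟨hL, hd, hBL⟩ := isCompatiblePair_iff.1 hcompat
  have hs := transpose_diagZero_mul_eq_neg hL hBL
  have hB := apply_castLE_self_eq_zero hs hd k
  have hMutB := mutB_eq_mutE_mul_mul_mutF hB
  have hLam := mutLam_eq_transpose_mutE_mul_mul_mutE hL hB
  set E := mutE hnm B k
  set F := mutF hnm B k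
  have hprod : (mutB hnm B k)ᵀ * mutLam hnm B L k = Bᵀ * L := by
    calc (mutB hnm B k)ᵀ * mutLam hnm B L k = Fᵀ * Bᵀ * (E * E)ᵀ * L * E := by
          simp only [hMutB, hLam, transpose_mul, Matrix.mul_assoc]
      _ = Fᵀ * (Bᵀ * L) * E := by
          simp only [E, mutE_mul_self, transpose_one, Matrix.mul_one, Matrix.mul_assoc]
      _ = Bᵀ * L := by rw [hBL, transpose_mutF_mul_diagZero_mul_mutE hs hd]
  refine ⟨hprod, isCompatiblePair_iff.2 ⟨?_, hd, hprod.trans hBL⟩⟩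
  rw [hLam]
  exact transpose_mul_mul_eq_neg hL E

/-- **Mutation preserves compatibility.**  If `(B̃, Λ)` is a compatible pair and
`1 ≤ k ≤ n`, then `μ_k(B̃)ᵀ · μ_k(Λ) = B̃ᵀ · Λ`; in particular the mutated pair
`(μ_k(B̃), μ_k(Λ))` is again compatible with the same diagonal matrix `D`. -/
theorem mutation_compatible {m n : ℕ} (hn : 1 ≤ n) (hnm : n ≤ m)
    (B : Matrix (Fin m) (Fin n) ℤ) (L : Matrix (Fin m) (Fin m) ℤ)
    (d : Fin n → ℤ) (hcompat : IsCompatiblePair hnm B L d) (k : Fin n) :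
    (mutB hnm B k)ᵀ * mutLam hnm B L k = Bᵀ * L ∧
      IsCompatiblePair hnm (mutB hnm B k) (mutLam hnm B L k) d :=
  mutation_compatible_general hnm B L d hcompat k
end

section
/- Let (B̃, Λ) be a compatible pair with B̃ᵀΛ = (D 0), where D = diag(d_1, …, d_n) has positive integer diagonal entries. Then the principal n×n submatrix B of B̃ (formed by the first n rows of B̃) is skew-symmetrizable with symmetrizer D: d_i·b_{ij} = −d_j·b_{ji} for all 1 ≤ i, j ≤ n; equivalently, the matrix D·B is skew-symmetric. -/
open Matrix

/-- The positive part `[a]_+ = max (a, 0)` of an integer. -/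
def posPart (a : ℤ) : ℤ := max a 0

/-- **The principal part of a compatible pair is skew-symmetrizable.**  If `(B̃, Λ)` is a
compatible pair with `B̃ᵀΛ = (D 0)`, `D = diag (d 0, …, d (n-1))` with positive entries,
then the principal `n×n` submatrix of `B̃` (its first `n` rows) satisfies
`d_i · b_{ij} = -(d_j · b_{ji})` for all `i, j`, i.e. `D·B` is skew-symmetric. -/
theorem compatible_principal_skew_symmetrizable {m n : ℕ} (hn : 1 ≤ n) (hnm : n ≤ m)
    (B : Matrix (Fin m) (Fin n) ℤ) (L : Matrix (Fin m) (Fin m) ℤ)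
    (d : Fin n → ℤ) (hcompat : IsCompatiblePair hnm B L d) :
    ∀ i j : Fin n,
      d i * B (Fin.castLE hnm i) j = -(d j * B (Fin.castLE hnm j) i) := by
  obtain ⟨hL, hd, hBL⟩ := hcompat
  set M : Matrix (Fin n) (Fin n) ℤ := Bᵀ * L * B with hM
  have hMentry : ∀ i j : Fin n, M i j = d i * B (Fin.castLE hnm i) j := by
    intro i j
    have : M i j = ∑ k : Fin m, (Bᵀ * L) i k * B k j := by
      simp [hM, Matrix.mul_apply]
    rw [this]
    rw [Finset.sum_eq_single (Fin.castLE hnm i)]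
    · rw [hBL]; simp
    · intro k _ hk
      rw [hBL]
      have : ¬ ((k : ℕ) = (i : ℕ)) := by
        intro h
        apply hk
        apply Fin.ext
        simpa using h
      simp [this]
    · simp
  have hskew : Mᵀ = -M := by
    have : Mᵀ = Bᵀ * Lᵀ * B := by
      simp [hM, Matrix.transpose_mul, Matrix.mul_assoc]
    rw [this, hL]
    simp [hM, Matrix.mul_assoc]
  intro i j
  rw [← hMentry, ← hMentry]
  have := congrFun (congrFun hskew j) i
  simpa [Matrix.transpose_apply] using this
end

section
/- Let (B̃, Λ) be a compatible pair. Then B̃ has full rank n; that is, the n columns of B̃ are linearly independent over ℚ (equivalently, the rank of B̃ regarded as a matrix over ℚ equals n). -/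
/-! Over `ℚ` the leading `n × n` block of `B̃ᵀ Λ` is the invertible diagonal matrix `D`, so
`n ≤ rank (B̃ᵀ Λ) ≤ rank B̃ᵀ = rank B̃ ≤ n`. -/

open Matrix

theorem Matrix.card_le_rank_of_isUnit_submatrix {R m n : Type*} [CommSemiring R]
    [StrongRankCondition R] [Fintype m] [DecidableEq m] [Fintype n]
    (A : Matrix m n R) (c : m → n) (h : IsUnit (A.submatrix id c)) :
    Fintype.card m ≤ A.rank :=
  (rank_of_isUnit _ h).symm.le.trans (rank_submatrix_le A id c)

theorem IsCompatiblePair.submatrix_castLE_eq_diagonal {m n : ℕ} {hnm : n ≤ m}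
    {B : Matrix (Fin m) (Fin n) ℤ} {L : Matrix (Fin m) (Fin m) ℤ} {d : Fin n → ℤ}
    (h : IsCompatiblePair hnm B L d) :
    (Bᵀ * L).submatrix id (Fin.castLE hnm) = diagonal d := by
  ext i j
  simp only [submatrix_apply, id, h.2.2, diagonal_apply, Fin.val_castLE, Fin.val_inj, eq_comm]

theorem compatible_full_rank_general {m n : ℕ} (hnm : n ≤ m)
    (B : Matrix (Fin m) (Fin n) ℤ) (L : Matrix (Fin m) (Fin m) ℤ)
    (d : Fin n → ℤ) (hcompat : IsCompatiblePair hnm B L d) :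
    (B.map (fun x : ℤ => (x : ℚ))).rank = n := by
  set Bℚ := B.map (Int.castRingHom ℚ)
  set Lℚ := L.map (Int.castRingHom ℚ)
  have hunit : IsUnit ((Bℚᵀ * Lℚ).submatrix id (Fin.castLE hnm)) := by
    rw [← transpose_map, ← Matrix.map_mul, submatrix_map, hcompat.submatrix_castLE_eq_diagonal,
      diagonal_map (map_zero _), isUnit_diagonal, Pi.isUnit_iff]
    exact fun i => isUnit_iff_ne_zero.mpr (by simpa using (hcompat.2.1 i).ne')
  refine le_antisymm (rank_le_width _) ?_
  calc n = Fintype.card (Fin n) := (Fintype.card_fin n).symm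
    _ ≤ (Bℚᵀ * Lℚ).rank := card_le_rank_of_isUnit_submatrix _ _ hunit
    _ ≤ Bℚᵀ.rank := rank_mul_le_left _ _
    _ = Bℚ.rank := rank_transpose _

/-- **A compatible pair has full-rank exchange matrix.**  If `(B̃, Λ)` is a compatible
pair, then `B̃` has full rank `n` over `ℚ`. -/
theorem compatible_full_rank {m n : ℕ} (hn : 1 ≤ n) (hnm : n ≤ m)
    (B : Matrix (Fin m) (Fin n) ℤ) (L : Matrix (Fin m) (Fin m) ℤ)
    (d : Fin n → ℤ) (hcompat : IsCompatiblePair hnm B L d) :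
    (B.map (fun x : ℤ => (x : ℚ))).rank = n :=
  compatible_full_rank_general hnm B L d hcompat
end
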